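/- arXiv:1802.09446 — 3 statements merged into one kernel-verified Lean document; each statement's English description precedes it below -/
import Mathlib

section
/- Let ν ≥ 1 be a real number and k ≥ 1 an integer. For all real numbers 0 ≤ v_1 ≤ v_2 ≤ ... ≤ v_k, one has (∑_{j=1}^k v_j)^ν ≥ ∑_{j=1}^k v_j^ν · [(k-j+1)^ν - (k-j)^ν]. -/
/-!
Induct on `k`, splitting off the smallest term `v₀`. The remaining terms sum to some
`S ≥ (k - 1) v₀`, and increments of the convex function `t ↦ t ^ ν` grow with the base point, so
`(S + v₀) ^ ν - S ^ ν ≥ (k v₀) ^ ν - ((k - 1) v₀) ^ ν = v₀ ^ ν (k ^ ν - (k - 1) ^ ν)`.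
-/

open Finset Real

theorem ConvexOn.map_add_add_map_le {𝕜 : Type*} [Field 𝕜] [LinearOrder 𝕜]
    [IsStrictOrderedRing 𝕜] {s : Set 𝕜} {f : 𝕜 → 𝕜} (hf : ConvexOn 𝕜 s f) {a b d : 𝕜}
    (ha : a ∈ s) (hbd : b + d ∈ s) (hab : a ≤ b) (hd : 0 ≤ d) :
    f (a + d) + f b ≤ f a + f (b + d) := by
  rcases (sub_nonneg.mpr (hab.trans (le_add_of_nonneg_right hd)) : 0 ≤ b + d - a).eq_or_lt
    with hL | hL
  · obtain rfl : d = 0 := by linarith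
    obtain rfl : a = b := by linarith
    simp
  -- `a + d` and `b` are convex combinations of `a` and `b + d` whose weights on `a` sum to `1`.
  have hw : ∀ {x y : 𝕜}, 0 ≤ x → 0 ≤ y → x + y = b + d - a →
      f ((x / (b + d - a)) • a + (y / (b + d - a)) • (b + d))
        ≤ x / (b + d - a) * f a + y / (b + d - a) * f (b + d) := fun hx hy hxy =>
    hf.2 ha hbd (div_nonneg hx hL.le) (div_nonneg hy hL.le) (by field_simp; linarith)
  have h₁ := hw (sub_nonneg.mpr hab) hd (by ring)
  have h₂ := hw hd (sub_nonneg.mpr hab) (by ring)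
  have e₁ : ((b - a) / (b + d - a)) • a + (d / (b + d - a)) • (b + d) = a + d := by
    simp only [smul_eq_mul]; field_simp; ring
  have e₂ : (d / (b + d - a)) • a + ((b - a) / (b + d - a)) • (b + d) = b := by
    simp only [smul_eq_mul]; field_simp; ring
  have hsum : (b - a) / (b + d - a) + d / (b + d - a) = 1 := by field_simp; ring
  rw [e₁] at h₁
  rw [e₂] at h₂
  linear_combination h₁ + h₂ + (f a + f (b + d)) * hsum

theorem rpow_mul_natCast_succ_sub_le {ν : ℝ} (hν : 1 ≤ ν) {n : ℕ} {x S : ℝ} (hx : 0 ≤ x)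
    (hS : n * x ≤ S) : x ^ ν * (((n + 1 : ℕ) : ℝ) ^ ν - (n : ℝ) ^ ν) ≤ (S + x) ^ ν - S ^ ν := by
  have key := (convexOn_rpow hν).map_add_add_map_le (Set.mem_Ici.mpr (by positivity))
    (Set.mem_Ici.mpr (by linarith [mul_nonneg n.cast_nonneg hx] : (0 : ℝ) ≤ S + x)) hS hx
  have e : (n : ℝ) * x + x = ((n + 1 : ℕ) : ℝ) * x := by push_cast; ring
  rw [e, mul_rpow (by positivity) hx, mul_rpow n.cast_nonneg hx] at key
  linarith

theorem stmt_3_general (k : ℕ) (ν : ℝ) (hν : 1 ≤ ν)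
    (v : Fin k → ℝ) (h0 : ∀ i, 0 ≤ v i) (hm : Monotone v) :
    ∑ i : Fin k, v i ^ ν * (((k - (i : ℕ) : ℕ) : ℝ) ^ ν - ((k - (i : ℕ) - 1 : ℕ) : ℝ) ^ ν)
      ≤ (∑ i : Fin k, v i) ^ ν := by
  induction k with
  | zero => simp [zero_rpow (by linarith : ν ≠ 0)]
  | succ k ih =>
    have tail := ih (v ∘ Fin.succ) (fun i => h0 _) (hm.comp Fin.strictMono_succ.monotone)
    have hS : (k : ℝ) * v 0 ≤ ∑ i : Fin k, v i.succ := by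
      simpa using Finset.card_nsmul_le_sum univ (fun i : Fin k => v i.succ) (v 0)
        (fun i _ => hm (Fin.zero_le _))
    have step := rpow_mul_natCast_succ_sub_le hν (h0 0) hS
    simp only [Fin.sum_univ_succ, Function.comp_apply, Fin.val_zero, Fin.val_succ, Nat.sub_zero,
      Nat.add_sub_cancel, Nat.add_sub_add_right] at tail ⊢
    rw [add_comm (v 0)]
    linarith

/-- For real `ν ≥ 1`, `k ≥ 1` and `0 ≤ v_1 ≤ … ≤ v_k`,
`(∑ v_j)^ν ≥ ∑ v_j^ν [(k-j+1)^ν - (k-j)^ν]`. -/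
theorem stmt_3 (k : ℕ) (hk : 1 ≤ k) (ν : ℝ) (hν : 1 ≤ ν)
    (v : Fin k → ℝ) (h0 : ∀ i, 0 ≤ v i) (hm : Monotone v) :
    ∑ i : Fin k, v i ^ ν * (((k - (i : ℕ) : ℕ) : ℝ) ^ ν - ((k - (i : ℕ) - 1 : ℕ) : ℝ) ^ ν)
      ≤ (∑ i : Fin k, v i) ^ ν :=
  stmt_3_general k ν hν v h0 hm
end

section
/- Let U_1 ≤ ... ≤ U_k be the k smallest order statistics of n-1 i.i.d. uniform random variables on [0,1], with 1 ≤ k ≤ n-1. For 0 < λ < k and S > 0, P{ (1/k)∑_{j=1}^k log(1/U_j) > S } ≤ e^{-λS} / (1-λ/k)^{k-1} · Γ(n)Γ(k-λ) / (Γ(n-λ)Γ(k)). -/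
open MeasureTheory

/-- The `j`-th smallest value of `x : Fin m → ℝ` (0-indexed). -/
noncomputable def orderStat {m : ℕ} (x : Fin m → ℝ) (j : Fin m) : ℝ :=
  (Multiset.sort (Multiset.map x Finset.univ.val) (· ≤ ·)).get
    (Fin.cast (by simp) j)

/-!
With `a = λ / k`, Markov's inequality bounds the probability by `e^{-λS} · E ∏_{j<k} U_j^{-a}`.
Summing over the `m!` orderings of the sample (`m = n - 1`), this moment is at most `m!` times
the integral of `∏_{j<k} y_j^{-a}` over the ordered simplex `y_0 ≤ ⋯ ≤ y_{m-1} ≤ 1` in `[0,1]^m`.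
Integrating out `y_0, y_1, …` in turn, the integral of `∏ y_i^{c_i}` over `y_0 ≤ ⋯ ≤ y_{r-1} ≤ t`
is `t^{P_r} / (P_1 ⋯ P_r)` with `P_j = j + c_0 + ⋯ + c_{j-1}`. Here `P_j = j (1 - a)` for `j ≤ k`
and `P_j = j - λ` beyond, so the product is a ratio of Gamma values.
-/

open Finset Set
open scoped ENNReal Nat

theorem orderStat_eq_comp_sort {m : ℕ} (x : Fin m → ℝ) (j : Fin m) :
    orderStat x j = x (Tuple.sort x j) := by
  have hsort : Multiset.sort (Multiset.map x univ.val) (· ≤ ·) = List.ofFn (x ∘ Tuple.sort x) := by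
    rw [Fin.univ_val_map, Multiset.coe_sort]
    exact ((List.mergeSort_perm _ _).trans ((Tuple.sort x).ofFn_comp_perm x).symm).eq_of_pairwise'
      (List.pairwise_mergeSort' _ _) (Tuple.monotone_sort x).sortedLE_ofFn.pairwise
  simp only [orderStat, List.get_of_eq hsort]
  simp

theorem apply_comp_sort_le_sum_perm {α : Type*} [LinearOrder α] {m : ℕ}
    (g : (Fin m → α) → ℝ≥0∞) (x : Fin m → α) :
    g (x ∘ Tuple.sort x) ≤ ∑ σ : Equiv.Perm (Fin m), {y | Monotone y}.indicator g (x ∘ σ) :=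
  (indicator_of_mem (Tuple.monotone_sort x) g).symm.trans_le <|
    single_le_sum (f := fun σ : Equiv.Perm (Fin m) => {y | Monotone y}.indicator g (x ∘ σ))
      (fun _ _ => zero_le) (mem_univ _)

theorem Fin.monotone_snoc_iff {α : Type*} [Preorder α] {r : ℕ} {z : Fin r → α} {s : α} :
    Monotone (Fin.snoc z s : Fin (r + 1) → α) ↔ Monotone z ∧ ∀ i, z i ≤ s := by
  constructor
  · intro h
    exact ⟨fun i j hij => by simpa using h (Fin.castSucc_le_castSucc_iff.2 hij),
      fun i => by simpa using h (Fin.castSucc_lt_last i).le⟩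
  · rintro ⟨hz, hs⟩ i j hij
    induction j using Fin.lastCases with
    | last => induction i using Fin.lastCases <;> simp [hs]
    | cast j =>
      induction i using Fin.lastCases with
      | last => exact absurd hij (not_le.2 (Fin.castSucc_lt_last j))
      | cast i => simpa using hz (Fin.castSucc_le_castSucc_iff.1 hij)

theorem measurableSet_monotone (r : ℕ) : MeasurableSet {y : Fin r → ℝ | Monotone y} := by
  have : {y : Fin r → ℝ | Monotone y} = ⋂ i, ⋂ j, ⋂ (_ : i ≤ j), {y | y i ≤ y j} := by
    ext y; simp [Monotone]
  rw [this]
  exact .iInter fun i => .iInter fun j => .iInter fun _ =>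
    measurableSet_le (measurable_pi_apply i) (measurable_pi_apply j)

section Pi
variable {α : Type*} [MeasurableSpace α] (ν : Measure α) [SigmaFinite ν]

theorem lintegral_pi_fin_snoc {r : ℕ} {f : (Fin (r + 1) → α) → ℝ≥0∞} (hf : Measurable f) :
    ∫⁻ y, f y ∂Measure.pi (fun _ => ν) =
      ∫⁻ s, ∫⁻ z, f (Fin.snoc z s) ∂Measure.pi (fun _ => ν) ∂ν := by
  set e := (MeasurableEquiv.piFinSuccAbove (fun _ => α) (Fin.last r)).symm
  have he : MeasurePreserving e _ _ :=
    (measurePreserving_piFinSuccAbove (fun _ : Fin (r + 1) => ν) (Fin.last r)).symm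
  have hsnoc : ∀ p : α × (Fin r → α), e p = Fin.snoc p.2 p.1 := fun ⟨s, z⟩ =>
    Fin.insertNth_last' s z
  have hm : Measurable fun p : α × (Fin r → α) => f (Fin.snoc p.2 p.1) := by
    simpa only [Function.comp_def, hsnoc] using hf.comp e.measurable
  rw [← he.lintegral_comp_emb e.measurableEmbedding]
  simp only [hsnoc]
  exact lintegral_prod _ hm.aemeasurable

theorem lintegral_sum_perm_comp {m : ℕ} {f : (Fin m → α) → ℝ≥0∞} (hf : Measurable f) :
    ∫⁻ x, ∑ σ : Equiv.Perm (Fin m), f (x ∘ σ) ∂Measure.pi (fun _ => ν) =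
      m ! * ∫⁻ y, f y ∂Measure.pi (fun _ => ν) := by
  have hcomp : ∀ σ : Equiv.Perm (Fin m),
      ∫⁻ x, f (x ∘ σ) ∂Measure.pi (fun _ => ν) = ∫⁻ y, f y ∂Measure.pi (fun _ => ν) := by
    intro σ
    have he := measurePreserving_piCongrLeft (fun _ : Fin m => ν) σ
    refine (he.lintegral_comp_emb (MeasurableEquiv.measurableEmbedding _)
      fun x => f (x ∘ σ)).symm.trans ?_
    congr with y
    congr 1
    ext i
    simp [MeasurableEquiv.coe_piCongrLeft, Equiv.piCongrLeft_apply_apply]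
  have hm : ∀ σ : Equiv.Perm (Fin m), Measurable fun x : Fin m → α => f (x ∘ σ) := fun σ =>
    hf.comp (measurable_pi_lambda _ fun i => measurable_pi_apply _)
  rw [lintegral_finsetSum' _ fun σ _ => (hm σ).aemeasurable]
  simp [hcomp, Fintype.card_perm]

end Pi

theorem measure_le_of_le_comp_sort (ν : Measure ℝ) [SigmaFinite ν] {m : ℕ}
    {g : (Fin m → ℝ) → ℝ≥0∞} (hg : Measurable g) {A : Set (Fin m → ℝ)} {ε : ℝ≥0∞} (hε : ε ≠ 0)
    (hε' : ε ≠ ∞) (hA : ∀ x ∈ A, ε ≤ g (x ∘ Tuple.sort x)) :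
    Measure.pi (fun _ => ν) A ≤
      m ! * (∫⁻ y in {y | Monotone y}, g y ∂Measure.pi fun _ => ν) / ε := by
  have hmeas : Measurable ({y : Fin m → ℝ | Monotone y}.indicator g) :=
    hg.indicator (measurableSet_monotone m)
  calc Measure.pi (fun _ => ν) A
      ≤ Measure.pi (fun _ => ν)
          {x | ε ≤ ∑ σ : Equiv.Perm (Fin m), {y | Monotone y}.indicator g (x ∘ σ)} :=
        measure_mono fun x hx => (hA x hx).trans (apply_comp_sort_le_sum_perm g x)
    _ ≤ (∫⁻ x, ∑ σ : Equiv.Perm (Fin m), {y | Monotone y}.indicator g (x ∘ σ)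
          ∂Measure.pi fun _ => ν) / ε :=
        meas_ge_le_lintegral_div (Finset.measurable_sum _ fun σ _ =>
          hmeas.comp (measurable_pi_lambda _ fun i => measurable_pi_apply _)).aemeasurable hε hε'
    _ = _ := by
        rw [lintegral_sum_perm_comp ν hmeas, lintegral_indicator (measurableSet_monotone m)]

theorem setLIntegral_Ioc_ofReal_rpow {b t : ℝ} (hb : -1 < b) (ht : 0 ≤ t) :
    ∫⁻ s in Ioc 0 t, ENNReal.ofReal (s ^ b) = ENNReal.ofReal (t ^ (b + 1) / (b + 1)) := by
  have hint : IntegrableOn (fun s : ℝ => s ^ b) (Ioc 0 t) :=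
    (intervalIntegrable_iff_integrableOn_Ioc_of_le ht).1
      (intervalIntegral.intervalIntegrable_rpow' hb)
  rw [← ofReal_integral_eq_lintegral_ofReal hint
    (ae_restrict_of_forall_mem measurableSet_Ioc fun s hs => Real.rpow_nonneg hs.1.le b),
    ← intervalIntegral.integral_of_le ht, integral_rpow (Or.inl hb),
    Real.zero_rpow (by linarith), sub_zero]

def orderedBelow (r : ℕ) (t : ℝ) : Set (Fin r → ℝ) := {y | Monotone y ∧ ∀ i, y i ≤ t}

theorem measurableSet_orderedBelow (r : ℕ) (t : ℝ) : MeasurableSet (orderedBelow r t) := by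
  have : orderedBelow r t = {y | Monotone y} ∩ ⋂ i, {y | y i ≤ t} := by ext; simp [orderedBelow]
  rw [this]
  exact (measurableSet_monotone r).inter
    (.iInter fun i => measurableSet_le (measurable_pi_apply i) measurable_const)

theorem snoc_mem_orderedBelow {r : ℕ} {z : Fin r → ℝ} {s t : ℝ} :
    Fin.snoc z s ∈ orderedBelow (r + 1) t ↔ s ≤ t ∧ z ∈ orderedBelow r s := by
  simp only [orderedBelow, mem_ofPred_eq, Fin.monotone_snoc_iff, Fin.forall_fin_succ',
    Fin.snoc_castSucc, Fin.snoc_last]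
  exact ⟨fun ⟨hz, _, hst⟩ => ⟨hst, hz⟩, fun ⟨hst, hz, hzs⟩ =>
    ⟨⟨hz, hzs⟩, fun i => (hzs i).trans hst, hst⟩⟩

noncomputable def rpowProd {r : ℕ} (c : ℕ → ℝ) (y : Fin r → ℝ) : ℝ≥0∞ :=
  ∏ i, ENNReal.ofReal (y i) ^ c i

theorem measurable_rpowProd (r : ℕ) (c : ℕ → ℝ) : Measurable (rpowProd (r := r) c) :=
  Finset.measurable_prod _ fun i _ => (measurable_pi_apply i).ennreal_ofReal.pow_const _

theorem rpowProd_snoc {r : ℕ} (c : ℕ → ℝ) (z : Fin r → ℝ) (s : ℝ) :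
    rpowProd c (Fin.snoc z s : Fin (r + 1) → ℝ) = rpowProd c z * ENNReal.ofReal s ^ c r := by
  simp [rpowProd, Fin.prod_univ_castSucc]

def simplexExponent (c : ℕ → ℝ) (j : ℕ) : ℝ := j + ∑ i ∈ range j, c i

theorem simplexExponent_succ (c : ℕ → ℝ) (j : ℕ) :
    simplexExponent c (j + 1) = simplexExponent c j + c j + 1 := by
  simp only [simplexExponent, sum_range_succ, Nat.cast_succ]
  ring

theorem lintegral_indicator_orderedBelow_snoc (ν : Measure ℝ) (c : ℕ → ℝ) {r : ℕ} (t s : ℝ) :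
    ∫⁻ z, (orderedBelow (r + 1) t).indicator (rpowProd c) (Fin.snoc z s) ∂Measure.pi (fun _ => ν) =
      (Iic t).indicator (fun s => ENNReal.ofReal s ^ c r) s *
        ∫⁻ z in orderedBelow r s, rpowProd c z ∂Measure.pi (fun _ => ν) := by
  by_cases hst : s ≤ t
  · have hsnoc : ∀ z : Fin r → ℝ, (orderedBelow (r + 1) t).indicator (rpowProd c) (Fin.snoc z s) =
        ENNReal.ofReal s ^ c r * (orderedBelow r s).indicator (rpowProd c) z := fun z => by
      by_cases hz : z ∈ orderedBelow r s <;>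
        simp [snoc_mem_orderedBelow, hst, hz, rpowProd_snoc, mul_comm]
    simp only [hsnoc, indicator_of_mem (show s ∈ Iic t from hst)]
    rw [lintegral_const_mul _
        ((measurable_rpowProd r c).indicator (measurableSet_orderedBelow r s)),
      lintegral_indicator (measurableSet_orderedBelow r s)]
  · simp [snoc_mem_orderedBelow, hst]

local notation "𝕌" => (volume.restrict (Icc (0 : ℝ) 1) : Measure ℝ)

theorem setLIntegral_orderedBelow_rpowProd (c : ℕ → ℝ) (r : ℕ)
    (hc : ∀ j < r, 0 < simplexExponent c (j + 1)) {t : ℝ} (ht0 : 0 < t) (ht1 : t ≤ 1) :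
    ∫⁻ y in orderedBelow r t, rpowProd c y ∂Measure.pi (fun _ => 𝕌) =
      ENNReal.ofReal (t ^ simplexExponent c r / ∏ j ∈ range r, simplexExponent c (j + 1)) := by
  induction r generalizing t with
  | zero =>
    have : orderedBelow 0 t = univ := eq_univ_of_forall fun y => ⟨fun i => i.elim0, (·.elim0)⟩
    simp [this, rpowProd, simplexExponent]
  | succ r ih =>
    set D := ∏ j ∈ range r, simplexExponent c (j + 1)
    have hD : 0 < D := prod_pos fun j hj => hc j (by simp at hj; omega)
    have hP : 0 < simplexExponent c (r + 1) := hc r r.lt_succ_self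
    have hslice : ∀ s ∈ Ioc (0 : ℝ) 1, ∫⁻ z, (orderedBelow (r + 1) t).indicator (rpowProd c)
        (Fin.snoc z s) ∂Measure.pi (fun _ => 𝕌) = (Ioc 0 t).indicator (fun s =>
          ENNReal.ofReal (s ^ (simplexExponent c (r + 1) - 1)) * ENNReal.ofReal D⁻¹) s := by
      rintro s ⟨hs0, hs1⟩
      rw [lintegral_indicator_orderedBelow_snoc, ih (fun j hj => hc j (by omega)) hs0 hs1]
      by_cases hst : s ≤ t
      · rw [indicator_of_mem (show s ∈ Iic t from hst),
          indicator_of_mem (show s ∈ Ioc 0 t from ⟨hs0, hst⟩), ENNReal.ofReal_rpow_of_pos hs0,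
          ← ENNReal.ofReal_mul (by positivity), ← ENNReal.ofReal_mul (by positivity),
          simplexExponent_succ, add_sub_cancel_right, Real.rpow_add hs0]
        congr 1
        ring
      · simp [hst]
    calc ∫⁻ y in orderedBelow (r + 1) t, rpowProd c y ∂Measure.pi (fun _ => 𝕌)
        = ∫⁻ s in Ioc 0 1, ∫⁻ z, (orderedBelow (r + 1) t).indicator (rpowProd c)
            (Fin.snoc z s) ∂Measure.pi (fun _ => 𝕌) := by
          rw [← lintegral_indicator (measurableSet_orderedBelow _ _), lintegral_pi_fin_snoc _
            ((measurable_rpowProd _ c).indicator (measurableSet_orderedBelow _ _)),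
            Measure.restrict_congr_set Ioc_ae_eq_Icc.symm]
      _ = ∫⁻ s in Ioc 0 t, ENNReal.ofReal (s ^ (simplexExponent c (r + 1) - 1)) *
            ENNReal.ofReal D⁻¹ := by
          rw [setLIntegral_congr_fun measurableSet_Ioc hslice,
            lintegral_indicator measurableSet_Ioc,
            Measure.restrict_restrict measurableSet_Ioc, inter_eq_left.2 (Ioc_subset_Ioc_right ht1)]
      _ = _ := by
          rw [lintegral_mul_const _ (by fun_prop),
            setLIntegral_Ioc_ofReal_rpow (by linarith) ht0.le,
            sub_add_cancel, ← ENNReal.ofReal_mul (div_nonneg (Real.rpow_nonneg ht0.le _) hP.le),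
            prod_range_succ, ← div_div, div_right_comm, div_eq_mul_inv _ D]

noncomputable def headWeights (k : ℕ) (a : ℝ) (i : ℕ) : ℝ := if i < k then -a else 0

theorem simplexExponent_headWeights_of_le {k j : ℕ} (a : ℝ) (hj : j ≤ k) :
    simplexExponent (headWeights k a) j = j * (1 - a) := by
  induction j with
  | zero => simp [simplexExponent]
  | succ j ih =>
    rw [simplexExponent_succ, ih (by omega), headWeights, if_pos (by omega)]
    push_cast
    ring

theorem simplexExponent_headWeights_of_ge {k j : ℕ} (a : ℝ) (hj : k ≤ j) :
    simplexExponent (headWeights k a) j = j - k * a := by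
  induction j, hj using Nat.le_induction with
  | base => rw [simplexExponent_headWeights_of_le a le_rfl]; ring
  | succ j hj ih =>
    rw [simplexExponent_succ, ih, headWeights, if_neg (by omega)]
    push_cast
    ring

theorem simplexExponent_headWeights_pos {k : ℕ} {a : ℝ} (ha : a < 1) (j : ℕ) :
    0 < simplexExponent (headWeights k a) (j + 1) := by
  rcases le_or_gt (j + 1) k with hj | hj
  · rw [simplexExponent_headWeights_of_le a hj]
    exact mul_pos (by positivity) (by linarith)
  · rw [simplexExponent_headWeights_of_ge a hj.le]
    have : (k : ℝ) ≤ j := by exact_mod_cast Nat.lt_succ_iff.1 hj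
    push_cast
    nlinarith [mul_nonneg (Nat.cast_nonneg k) (sub_nonneg.2 ha.le)]

theorem prod_simplexExponent_headWeights {k m : ℕ} {lam : ℝ} (hlam0 : 0 < lam)
    (hlamk : lam < k) (hkm : k ≤ m) :
    ∏ j ∈ range m, simplexExponent (headWeights k (lam / k)) (j + 1) =
      (1 - lam / k) ^ (k - 1) * Real.Gamma k * Real.Gamma (m + 1 - lam) / Real.Gamma (k - lam) := by
  have hk : (0 : ℝ) < k := hlam0.trans hlamk
  have hGk : 0 < Real.Gamma (k - lam) := Real.Gamma_pos_of_pos (by linarith)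
  induction m, hkm using Nat.le_induction with
  | base =>
    rw [prod_congr rfl fun j hj => simplexExponent_headWeights_of_le _ (mem_range.1 hj),
      prod_mul_distrib, prod_const, card_range, ← Nat.cast_prod, prod_range_add_one_eq_factorial,
      show (k : ℝ) + 1 - lam = (k - lam) + 1 by ring, Real.Gamma_add_one (by linarith),
      mul_div_assoc, mul_div_cancel_right₀ _ hGk.ne']
    obtain ⟨k, rfl⟩ : ∃ k', k = k' + 1 := ⟨k - 1, by have := Nat.cast_pos.1 hk; omega⟩
    push_cast at hk ⊢
    rw [Nat.factorial_succ, Real.Gamma_nat_eq_factorial,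
      show (k : ℝ) + 1 - lam = (k + 1) * (1 - lam / (k + 1)) by field_simp]
    push_cast
    ring
  | succ m hkm ih =>
    have hm : (k : ℝ) ≤ m := by exact_mod_cast hkm
    rw [prod_range_succ, ih, simplexExponent_headWeights_of_ge _ (by omega),
      show ((m + 1 : ℕ) : ℝ) + 1 - lam = (m + 1 - lam) + 1 by push_cast; ring,
      Real.Gamma_add_one (by linarith)]
    field_simp
    push_cast
    ring

/-- For `u ≤ 0` the left side is a junk value of `Real.log`, but then the right side is `⊤`,
so the bound holds everywhere and no null set has to be discarded. -/
theorem ofReal_exp_mul_log_inv_le_rpow {a : ℝ} (ha : 0 ≤ a) (u : ℝ) :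
    ENNReal.ofReal (Real.exp (a * Real.log (1 / u))) ≤ ENNReal.ofReal u ^ (-a) := by
  rcases lt_or_ge 0 u with hu | hu
  · rw [ENNReal.ofReal_rpow_of_pos hu, Real.rpow_def_of_pos hu, one_div, Real.log_inv, mul_neg,
      mul_neg, mul_comm]
  rcases ha.eq_or_lt with rfl | ha
  · simp
  · rw [ENNReal.ofReal_of_nonpos hu, ENNReal.zero_rpow_of_neg (neg_neg_of_pos ha)]
    exact le_top

theorem ofReal_exp_le_rpowProd_headWeights {k m : ℕ} (hkm : k ≤ m) {a : ℝ} (ha : 0 ≤ a)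
    (u : Fin m → ℝ) :
    ENNReal.ofReal (Real.exp (a * ∑ j : Fin k, Real.log (1 / u (Fin.castLE hkm j)))) ≤
      rpowProd (headWeights k a) u := by
  rw [mul_sum, Real.exp_sum, ENNReal.ofReal_prod_of_nonneg fun _ _ => (Real.exp_pos _).le]
  calc ∏ j : Fin k, ENNReal.ofReal (Real.exp (a * Real.log (1 / u (Fin.castLE hkm j))))
      ≤ ∏ j : Fin k, ENNReal.ofReal (u (Fin.castLE hkm j)) ^ headWeights k a (Fin.castLE hkm j) :=
        prod_le_prod' fun j _ => by
          rw [headWeights, if_pos (by simp)]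
          exact ofReal_exp_mul_log_inv_le_rpow ha _
    _ = ∏ i ∈ univ.map (Fin.castLEEmb hkm), ENNReal.ofReal (u i) ^ headWeights k a i :=
        by rw [prod_map]; rfl
    _ ≤ rpowProd (headWeights k a) u :=
        prod_le_prod_of_subset_of_one_le' (subset_univ _) fun i _ hi => by
          rw [headWeights, if_neg fun h => hi (mem_map.2 ⟨⟨i, h⟩, mem_univ _, Fin.ext rfl⟩),
            ENNReal.rpow_zero]

theorem setLIntegral_monotone_eq_orderedBelow {m : ℕ} (f : (Fin m → ℝ) → ℝ≥0∞) :
    ∫⁻ y in {y | Monotone y}, f y ∂Measure.pi (fun _ => 𝕌) =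
      ∫⁻ y in orderedBelow m 1, f y ∂Measure.pi (fun _ => 𝕌) := by
  refine setLIntegral_congr ?_
  have hle : ∀ᵐ y ∂Measure.pi (fun _ => 𝕌), ∀ i, y i ≤ 1 :=
    ae_all_iff.2 fun i => (Measure.tendsto_eval_ae_ae (μ := fun _ : Fin m => 𝕌) (i := i)).eventually
      ((ae_restrict_mem measurableSet_Icc).mono fun s (hs : s ∈ Icc (0 : ℝ) 1) => hs.2)
  filter_upwards [hle] with y hy
  exact propext ⟨fun h => ⟨h, hy⟩, And.left⟩

theorem factorial_div_prod_simplexExponent_headWeights {k m : ℕ} {lam : ℝ} (hlam0 : 0 < lam)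
    (hlamk : lam < k) (hkm : k ≤ m) :
    (m ! : ℝ) / ∏ j ∈ range m, simplexExponent (headWeights k (lam / k)) (j + 1) =
      1 / (1 - lam / k) ^ (k - 1) *
        (Real.Gamma (m + 1) * Real.Gamma (k - lam) /
          (Real.Gamma (m + 1 - lam) * Real.Gamma k)) := by
  have hk : (0 : ℝ) < k := hlam0.trans hlamk
  have hm : (k : ℝ) ≤ m := by exact_mod_cast hkm
  have ha : 0 < 1 - lam / k := sub_pos.2 ((div_lt_one hk).2 hlamk)
  have hGk := Real.Gamma_pos_of_pos hk
  have hGkl := Real.Gamma_pos_of_pos (sub_pos.2 hlamk)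
  have hGml : 0 < Real.Gamma (m + 1 - lam) := Real.Gamma_pos_of_pos (by linarith)
  rw [prod_simplexExponent_headWeights hlam0 hlamk hkm, ← Real.Gamma_nat_eq_factorial]
  field_simp

theorem stmt_13_general (n k : ℕ) (hkn : k ≤ n - 1)
    (lam S : ℝ) (hlam0 : 0 < lam) (hlamk : lam < k) :
    (Measure.pi fun _ : Fin (n - 1) => volume.restrict (Set.Icc (0:ℝ) 1))
      {x | S < (1 / (k : ℝ)) *
        ∑ j : Fin k, Real.log (1 / orderStat x (Fin.castLE hkn j))}
    ≤ ENNReal.ofReal (Real.exp (-lam * S) / (1 - lam / k) ^ (k - 1) *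
        (Real.Gamma n * Real.Gamma (k - lam) / (Real.Gamma (n - lam) * Real.Gamma k))) := by
  have hk : (0 : ℝ) < k := hlam0.trans hlamk
  have hn : ((n - 1 : ℕ) : ℝ) + 1 = n := by
    rw [Nat.cast_sub (by have := Nat.cast_pos.1 hk; omega)]
    ring
  have hchernoff : ∀ x ∈ {x | S < (1 / (k : ℝ)) *
      ∑ j : Fin k, Real.log (1 / orderStat x (Fin.castLE hkn j))},
      ENNReal.ofReal (Real.exp (lam * S)) ≤
        rpowProd (headWeights k (lam / k)) (x ∘ Tuple.sort x) := by
    intro x hx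
    refine le_trans (ENNReal.ofReal_le_ofReal (Real.exp_le_exp.2 ?_))
      (ofReal_exp_le_rpowProd_headWeights hkn (div_pos hlam0 hk).le _)
    simp only [Function.comp_apply, ← orderStat_eq_comp_sort, div_eq_mul_one_div lam, mul_assoc]
    exact (mul_lt_mul_of_pos_left hx hlam0).le
  refine (measure_le_of_le_comp_sort _ (measurable_rpowProd _ _)
    (ENNReal.ofReal_pos.2 (Real.exp_pos _)).ne' ENNReal.ofReal_ne_top hchernoff).trans_eq ?_
  rw [setLIntegral_monotone_eq_orderedBelow, setLIntegral_orderedBelow_rpowProd _ _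
      (fun j _ => simplexExponent_headWeights_pos ((div_lt_one hk).2 hlamk) j) one_pos le_rfl,
    Real.one_rpow, ← ENNReal.ofReal_natCast, ← ENNReal.ofReal_mul (by positivity),
    ← ENNReal.ofReal_div_of_pos (Real.exp_pos _), mul_one_div, ← hn,
    factorial_div_prod_simplexExponent_headWeights hlam0 hlamk hkn, neg_mul, Real.exp_neg]
  ring_nf

/-- Chernoff bound for the log-sum of the `k` smallest order statistics of
`n-1` i.i.d. uniform-[0,1] variables: for `0 < λ < k` and `S > 0`,
`P{(1/k)∑ log(1/U_j) > S} ≤ e^{-λS}/(1-λ/k)^{k-1} · Γ(n)Γ(k-λ)/(Γ(n-λ)Γ(k))`. -/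
theorem stmt_13 (n k : ℕ) (hk : 1 ≤ k) (hkn : k ≤ n - 1) (hn : 2 ≤ n)
    (lam S : ℝ) (hlam0 : 0 < lam) (hlamk : lam < k) (hS : 0 < S) :
    (Measure.pi fun _ : Fin (n - 1) => volume.restrict (Set.Icc (0:ℝ) 1))
      {x | S < (1 / (k : ℝ)) *
        ∑ j : Fin k, Real.log (1 / orderStat x (Fin.castLE hkn j))}
    ≤ ENNReal.ofReal (Real.exp (-lam * S) / (1 - lam / k) ^ (k - 1) *
        (Real.Gamma n * Real.Gamma (k - lam) / (Real.Gamma (n - lam) * Real.Gamma k))) :=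
  stmt_13_general n k hkn lam S hlam0 hlamk
end

section
/- Fix an integer k ≥ 1 and a real ν ≥ 1, and set γ_j := (1-(j-1)/k)^ν - (1-j/k)^ν for j = 1,...,k. Then γ_j > 0, ∑_{j=1}^k γ_j = 1, and for all 0 ≤ u_1 ≤ ... ≤ u_k ≤ 1, ((1/k)∑_{j=1}^k u_j^{1/ν})^ν ≥ ∑_{j=1}^k γ_j u_j. -/
/-!
Put `v_i = u_i^{1/ν}` and `a_i = 1 - i/k`, so that `γ_i = a_i^ν - a_{i+1}^ν`, `1/k = a_i - a_{i+1}`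
and `a_k = 0`. For `a` antitone and `v` monotone, both nonnegative, induction on `n` gives
`∑_{i<n} (a_i^ν - a_{i+1}^ν) v_i^ν + (a_n v_n)^ν ≤ (∑_{i<n} (a_i - a_{i+1}) v_i + a_n v_n)^ν`:
in the step the left side grows by `(a_{n+1} v_{n+1})^ν - (a_{n+1} v_n)^ν`, while the base on the
right, which is at least `a_{n+1} v_n`, grows by the same `a_{n+1} (v_{n+1} - v_n)`; increments of
the convex function `t ↦ t^ν` over intervals of equal length grow with the starting point.
At `n = k` the boundary terms vanish.
-/

open Finset Real

theorem ConvexOn.map_add_sub_map_le {𝕜 : Type*} [Field 𝕜] [LinearOrder 𝕜]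
    [IsStrictOrderedRing 𝕜] {s : Set 𝕜} {f : 𝕜 → 𝕜} (hf : ConvexOn 𝕜 s f) {x y g : 𝕜}
    (hx : x ∈ s) (hy : y + g ∈ s) (hxy : x ≤ y) (hg : 0 ≤ g) :
    f (x + g) - f x ≤ f (y + g) - f y := by
  rcases (show 0 ≤ y - x + g by linarith).eq_or_lt with hd | hd
  · obtain rfl : y = x := by linarith
    obtain rfl : g = 0 := by linarith
    simp
  -- `x + g` and `y` are the convex combinations of `x` and `y + g` with swapped weights.
  have hab : (y - x) / (y - x + g) + g / (y - x + g) = 1 := by field_simp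
  have ha : 0 ≤ (y - x) / (y - x + g) := div_nonneg (sub_nonneg.2 hxy) hd.le
  have hb : 0 ≤ g / (y - x + g) := div_nonneg hg hd.le
  have h₁ := hf.2 hx hy ha hb hab
  have h₂ := hf.2 hx hy hb ha (by rw [add_comm, hab])
  simp only [smul_eq_mul] at h₁ h₂
  have e₁ : (y - x) / (y - x + g) * x + g / (y - x + g) * (y + g) = x + g := by
    field_simp; ring
  have e₂ : g / (y - x + g) * x + (y - x) / (y - x + g) * (y + g) = y := by
    field_simp; ring
  rw [e₁] at h₁
  rw [e₂] at h₂
  linear_combination h₁ + h₂ + (f x + f (y + g)) * hab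

section

variable {ν : ℝ} {a : ℕ → ℝ}

theorem sum_range_sub_rpow_mul_rpow_add_le (hν : 1 ≤ ν) {v : ℕ → ℝ} (ha : Antitone a)
    (ha₀ : ∀ i, 0 ≤ a i) (hv : Monotone v) (hv₀ : ∀ i, 0 ≤ v i) (n : ℕ) :
    ∑ i ∈ range n, (a i ^ ν - a (i + 1) ^ ν) * v i ^ ν + (a n * v n) ^ ν
      ≤ (∑ i ∈ range n, (a i - a (i + 1)) * v i + a n * v n) ^ ν := by
  induction n with
  | zero => simp
  | succ n ih =>
    set B := ∑ i ∈ range n, (a i - a (i + 1)) * v i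
    have hB : 0 ≤ B := sum_nonneg fun i _ => mul_nonneg (sub_nonneg.2 (ha i.le_succ)) (hv₀ i)
    have hg : 0 ≤ a (n + 1) * (v (n + 1) - v n) :=
      mul_nonneg (ha₀ _) (sub_nonneg.2 (hv n.le_succ))
    have hx : a (n + 1) * v n ≤ B + a n * v n :=
      (mul_le_mul_of_nonneg_right (ha n.le_succ) (hv₀ n)).trans (le_add_of_nonneg_left hB)
    have hshift := (convexOn_rpow hν).map_add_sub_map_le (mul_nonneg (ha₀ _) (hv₀ n))
      (add_nonneg (add_nonneg hB (mul_nonneg (ha₀ n) (hv₀ n))) hg) hx hg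
    rw [mul_rpow (ha₀ (n + 1)) (hv₀ n),
      show a (n + 1) * v n + a (n + 1) * (v (n + 1) - v n) = a (n + 1) * v (n + 1) by ring,
      show B + a n * v n + a (n + 1) * (v (n + 1) - v n)
        = B + (a n - a (n + 1)) * v n + a (n + 1) * v (n + 1) by ring] at hshift
    rw [mul_rpow (ha₀ n) (hv₀ n)] at ih
    rw [sum_range_succ, sum_range_succ]
    linarith

theorem sum_range_sub_rpow_mul_rpow_le (hν : 1 ≤ ν) {v : ℕ → ℝ} (ha : Antitone a)
    (ha₀ : ∀ i, 0 ≤ a i) (hv : Monotone v) (hv₀ : ∀ i, 0 ≤ v i) {n : ℕ} (hn : a n = 0) :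
    ∑ i ∈ range n, (a i ^ ν - a (i + 1) ^ ν) * v i ^ ν
      ≤ (∑ i ∈ range n, (a i - a (i + 1)) * v i) ^ ν := by
  simpa [hn, zero_rpow (by positivity : ν ≠ 0)] using
    sum_range_sub_rpow_mul_rpow_add_le hν ha ha₀ hv hv₀ n

-- Without the ascription `(i + 1 : ℕ)` the successor would be taken in `Fin k`, wrapping around.
theorem sum_univ_sub_rpow_mul_rpow_le (hν : 1 ≤ ν) (ha : Antitone a) (ha₀ : ∀ i, 0 ≤ a i)
    {k : ℕ} (hk : a k = 0) {v : Fin k → ℝ} (hv : Monotone v) (hv₀ : ∀ i, 0 ≤ v i) :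
    ∑ i : Fin k, (a i ^ ν - a (i + 1 : ℕ) ^ ν) * v i ^ ν
      ≤ (∑ i : Fin k, (a i - a (i + 1 : ℕ)) * v i) ^ ν := by
  rcases k with _ | k
  · simp [zero_rpow (by positivity : ν ≠ 0)]
  have hclamp : ∀ i : Fin (k + 1), v (Fin.clamp i k) = v i := fun i =>
    congrArg v (Fin.ext (min_eq_left (Nat.lt_succ_iff.1 i.isLt)))
  have hrange := sum_range_sub_rpow_mul_rpow_le hν ha ha₀ (hv.comp Fin.clamp_monotone)
    (fun n => hv₀ (Fin.clamp n k)) hk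
  simpa only [Function.comp_apply, ← Fin.sum_univ_eq_sum_range
    (fun n => (a n ^ ν - a (n + 1) ^ ν) * v (Fin.clamp n k) ^ ν),
    ← Fin.sum_univ_eq_sum_range (fun n => (a n - a (n + 1)) * v (Fin.clamp n k)), hclamp]
    using hrange

end

theorem one_sub_div_rpow_sub_pos {ν : ℝ} (hν : 0 < ν) {k i : ℕ} (hi : i < k) :
    0 < (1 - (i : ℝ) / k) ^ ν - (1 - ((i : ℝ) + 1) / k) ^ ν := by
  have hk : (0 : ℝ) < k := by exact_mod_cast i.zero_le.trans_lt hi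
  have hik : (i : ℝ) + 1 ≤ k := by exact_mod_cast hi
  refine sub_pos.2 (rpow_lt_rpow ?_ ?_ hν)
  · rw [sub_nonneg, div_le_one hk]; exact hik
  · gcongr; linarith

theorem sum_one_sub_div_rpow_sub_eq_one {ν : ℝ} (hν : ν ≠ 0) {k : ℕ} (hk : k ≠ 0) :
    ∑ i : Fin k, ((1 - (i : ℝ) / k) ^ ν - (1 - ((i : ℝ) + 1) / k) ^ ν) = 1 := by
  have htele := sum_range_sub' (fun i : ℕ => (1 - (i : ℝ) / k) ^ ν) k
  push_cast at htele
  rw [Fin.sum_univ_eq_sum_range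
    (fun i => (1 - (i : ℝ) / k) ^ ν - (1 - ((i : ℝ) + 1) / k) ^ ν), htele]
  simp [div_self (Nat.cast_ne_zero (R := ℝ) |>.2 hk), zero_rpow hν]

theorem stmt_19_general (k : ℕ) (hk : 1 ≤ k) (ν : ℝ) (hν : 1 ≤ ν)
    (u : Fin k → ℝ) (h0 : ∀ i, 0 ≤ u i) (hm : Monotone u) :
    (∀ i : Fin k, 0 < (1 - (i : ℝ) / k) ^ ν - (1 - ((i : ℝ) + 1) / k) ^ ν) ∧
    (∑ i : Fin k, ((1 - (i : ℝ) / k) ^ ν - (1 - ((i : ℝ) + 1) / k) ^ ν)) = 1 ∧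
    ∑ i : Fin k, ((1 - (i : ℝ) / k) ^ ν - (1 - ((i : ℝ) + 1) / k) ^ ν) * u i
      ≤ ((1 / (k : ℝ)) * ∑ i : Fin k, u i ^ (1 / ν)) ^ ν := by
  have hν₀ : 0 < ν := by linarith
  refine ⟨fun i => one_sub_div_rpow_sub_pos hν₀ i.isLt,
    sum_one_sub_div_rpow_sub_eq_one hν₀.ne' (by omega), ?_⟩
  have hk₀ : (0 : ℝ) < k := by exact_mod_cast hk
  set a : ℕ → ℝ := fun i => max (1 - i / k) 0 with ha
  have ha_of_le : ∀ i : ℕ, i ≤ k → a i = 1 - i / k := fun i hi =>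
    max_eq_left (sub_nonneg.2 ((div_le_one hk₀).2 (by exact_mod_cast hi)))
  have ha_anti : Antitone a := fun i j hij => max_le_max_right 0 (by gcongr)
  have hak : a k = 0 := by simp [ha, div_self hk₀.ne']
  calc ∑ i : Fin k, ((1 - (i : ℝ) / k) ^ ν - (1 - ((i : ℝ) + 1) / k) ^ ν) * u i
      = ∑ i : Fin k, (a i ^ ν - a (i + 1 : ℕ) ^ ν) * (u i ^ (1 / ν)) ^ ν :=
        sum_congr rfl fun i _ => by
          rw [ha_of_le i i.isLt.le, ha_of_le (i + 1) i.isLt, one_div,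
            rpow_inv_rpow (h0 i) hν₀.ne', Nat.cast_succ]
    _ ≤ (∑ i : Fin k, (a i - a (i + 1 : ℕ)) * u i ^ (1 / ν)) ^ ν :=
        sum_univ_sub_rpow_mul_rpow_le (v := fun i => u i ^ (1 / ν)) hν ha_anti
          (fun _ => le_max_right _ _) hak
          (fun i j hij => rpow_le_rpow (h0 i) (hm hij) (by positivity))
          (fun i => rpow_nonneg (h0 i) _)
    _ = ((1 / (k : ℝ)) * ∑ i : Fin k, u i ^ (1 / ν)) ^ ν := by
        rw [mul_sum]
        congr 1
        exact sum_congr rfl fun i _ => by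
          rw [ha_of_le i i.isLt.le, ha_of_le (i + 1) i.isLt, Nat.cast_succ]; ring

/-- With `γ_j := (1-(j-1)/k)^ν - (1-j/k)^ν` for `j = 1,…,k` (here indexed by
`i = j-1 : Fin k`), real `ν ≥ 1`: each `γ_j > 0`, `∑ γ_j = 1`, and for all
`0 ≤ u_1 ≤ … ≤ u_k ≤ 1`, `((1/k)∑ u_j^{1/ν})^ν ≥ ∑ γ_j u_j`. -/
theorem stmt_19 (k : ℕ) (hk : 1 ≤ k) (ν : ℝ) (hν : 1 ≤ ν)
    (u : Fin k → ℝ) (h0 : ∀ i, 0 ≤ u i) (h1 : ∀ i, u i ≤ 1) (hm : Monotone u) :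
    (∀ i : Fin k, 0 < (1 - (i : ℝ) / k) ^ ν - (1 - ((i : ℝ) + 1) / k) ^ ν) ∧
    (∑ i : Fin k, ((1 - (i : ℝ) / k) ^ ν - (1 - ((i : ℝ) + 1) / k) ^ ν)) = 1 ∧
    ∑ i : Fin k, ((1 - (i : ℝ) / k) ^ ν - (1 - ((i : ℝ) + 1) / k) ^ ν) * u i
      ≤ ((1 / (k : ℝ)) * ∑ i : Fin k, u i ^ (1 / ν)) ^ ν :=
  stmt_19_general k hk ν hν u h0 hm
end
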